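/- Let 𝒟 be the standard dyadic grid in ℝ^n, I ∈ 𝒟, 0 < η = 2^{−β} < 1, and t ≥ β an integer. Then the number of dyadic cubes Q ∈ 𝒟 with ℓ(Q) = 2^{−t}ℓ(I) that intersect the η/2-halo of the skeleton of I is at most C_n η 2^{tn}. -/
import Mathlib


open MeasureTheory

/-- The standard dyadic cube of generation `k` indexed by `m`, of side length `2^{-k}`. -/
def dyadicCube (n : ℕ) (k : ℤ) (m : Fin n → ℤ) : Set (Fin n → ℝ) :=
  {x | ∀ i, (m i : ℝ) * (2 : ℝ) ^ (-k) ≤ x i ∧ x i < ((m i : ℝ) + 1) * (2 : ℝ) ^ (-k)}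

/-- The skeleton of a dyadic cube: the union of the boundaries of its dyadic children. -/
def dyadicSkeleton (n : ℕ) (k : ℤ) (m : Fin n → ℤ) : Set (Fin n → ℝ) :=
  ⋃ (m' : Fin n → ℤ) (_ : ∀ i, m' i = 2 * m i ∨ m' i = 2 * m i + 1),
    frontier (dyadicCube n (k + 1) m')

/-- The `η`-halo of a dyadic cube: the open `η·ℓ(I)`-neighbourhood of its skeleton. -/
def dyadicHalo (n : ℕ) (η : ℝ) (k : ℤ) (m : Fin n → ℤ) : Set (Fin n → ℝ) :=
  Metric.thickening (η * (2 : ℝ) ^ (-k)) (dyadicSkeleton n k m)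

lemma frontier_dyadicCube_subset {n : ℕ} {k : ℤ} {m : Fin n → ℤ} {x : Fin n → ℝ}
    (hx : x ∈ frontier (dyadicCube n k m)) :
    (∀ i, (m i : ℝ) * (2:ℝ) ^ (-k) ≤ x i ∧ x i ≤ ((m i : ℝ) + 1) * (2:ℝ) ^ (-k)) ∧
      ∃ j, x j = (m j : ℝ) * (2:ℝ) ^ (-k) ∨ x j = ((m j : ℝ) + 1) * (2:ℝ) ^ (-k) := by
  rw [frontier] at hx
  have hcl : closure (dyadicCube n k m) ⊆
      Set.univ.pi fun i => Set.Icc ((m i : ℝ) * 2^(-k)) (((m i : ℝ)+1) * 2^(-k)) :=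
    closure_minimal (fun y hy => Set.mem_univ_pi.2 fun i => ⟨(hy i).1, (hy i).2.le⟩)
      (isClosed_set_pi fun i _ => isClosed_Icc)
  have hint : (Set.univ.pi fun i => Set.Ioo ((m i : ℝ) * 2^(-k)) (((m i : ℝ)+1) * 2^(-k)))
      ⊆ interior (dyadicCube n k m) :=
    interior_maximal (fun y hy i => ⟨(Set.mem_univ_pi.1 hy i).1.le, (Set.mem_univ_pi.1 hy i).2⟩)
      (isOpen_set_pi Set.finite_univ fun i _ => isOpen_Ioo)
  have h1 := Set.mem_univ_pi.1 (hcl hx.1)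
  refine ⟨fun i => h1 i, ?_⟩
  by_contra hcon
  push_neg at hcon
  exact hx.2 (hint (Set.mem_univ_pi.2 fun i =>
    ⟨lt_of_le_of_ne (h1 i).1 (Ne.symm (hcon i).1), lt_of_le_of_ne (h1 i).2 (hcon i).2⟩))

lemma halo_subset_biUnion (n' : ℕ) (k : ℤ) (m : Fin (n'+1) → ℤ) (β t : ℕ)
    (hβ : 1 ≤ β) (hβt : β ≤ t) :
    {m' : Fin (n'+1) → ℤ |
        (dyadicCube (n'+1) (k + t) m' ∩
          dyadicHalo (n'+1) ((2 : ℝ) ^ (-(β : ℤ)) / 2) k m).Nonempty} ⊆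
    ↑(Finset.univ.biUnion fun j : Fin (n'+1) => Fintype.piFinset fun i =>
        if i = j then
          ((Finset.Icc ((2*m j)*2^(t-1) - 2^(t-β)) ((2*m j)*2^(t-1) + 2^(t-β)) ∪
            Finset.Icc ((2*m j+1)*2^(t-1) - 2^(t-β)) ((2*m j+1)*2^(t-1) + 2^(t-β))) ∪
            Finset.Icc ((2*m j+2)*2^(t-1) - 2^(t-β)) ((2*m j+2)*2^(t-1) + 2^(t-β)) : Finset ℤ)
        else Finset.Icc (2*m i*2^(t-1) - 2^(t-β)) ((2*m i+2)*2^(t-1) + 2^(t-β))) := by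
  intro m' hm'
  obtain ⟨y, hy1, hy2⟩ := hm'
  have hy2' : y ∈ Metric.thickening ((2:ℝ) ^ (-(β : ℤ)) / 2 * 2 ^ (-k))
      (dyadicSkeleton (n'+1) k m) := hy2
  rw [Metric.mem_thickening_iff] at hy2'
  obtain ⟨z, hz, hdist⟩ := hy2'
  simp only [dyadicSkeleton, Set.mem_iUnion] at hz
  obtain ⟨m'', hm'', hzf⟩ := hz
  obtain ⟨hzbox, j, hzj⟩ := frontier_dyadicCube_subset hzf
  set E : ℝ := (2:ℝ) ^ (-(k + (t:ℤ))) with hEdef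
  set A : ℝ := (2:ℝ) ^ (-(k + 1)) with hAdef
  set r : ℝ := (2:ℝ) ^ (-(β : ℤ)) / 2 * 2 ^ (-k) with hrdef
  have ht1 : 1 ≤ t := le_trans hβ hβt
  have hE : (0:ℝ) < E := by positivity
  have hA : (0:ℝ) < A := by positivity
  have hrpos : (0:ℝ) < r := by positivity
  have hPE : ((2:ℝ))^(t-1) * E = A := by
    rw [hEdef, hAdef, ← zpow_natCast (2:ℝ) (t-1), ← zpow_add₀ (two_ne_zero)]
    congr 1
    omega
  have hQE : ((2:ℝ))^(t-β) * E = 2 * r := by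
    rw [hEdef, hrdef, ← zpow_natCast (2:ℝ) (t-β), ← zpow_add₀ (two_ne_zero)]
    rw [show (((t - β : ℕ) : ℤ) + -(k + t)) = (-(β:ℤ)) + (-k) by omega,
      zpow_add₀ (two_ne_zero)]
    ring
  have hdi : ∀ i, |y i - z i| < r := by
    intro i
    have := (dist_pi_lt_iff hrpos).1 hdist i
    rwa [Real.dist_eq] at this
  have keyU : ∀ (i : Fin (n'+1)) (d : ℤ), z i ≤ (d:ℝ) * A →
      m' i ≤ d * 2^(t-1) + 2^(t-β) := by
    intro i d hzd
    have h1 : (m' i : ℝ) * E ≤ y i := (hy1 i).1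
    have h2 : y i - z i < r := (abs_lt.1 (hdi i)).2
    have hzd' : z i ≤ (d:ℝ) * ((2:ℝ)^(t-1) * E) := by rw [hPE]; exact hzd
    have hlt : (m' i : ℝ) * E < ((d:ℝ) * 2^(t-1) + 2^(t-β)) * E := by nlinarith
    have h3 : (m' i : ℝ) < (d:ℝ) * 2^(t-1) + 2^(t-β) := lt_of_mul_lt_mul_right hlt hE.le
    have h4 : (m' i : ℝ) ≤ ((d * 2^(t-1) + 2^(t-β) : ℤ) : ℝ) := by push_cast; linarith
    exact_mod_cast h4
  have keyL : ∀ (i : Fin (n'+1)) (d : ℤ), (d:ℝ) * A ≤ z i →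
      d * 2^(t-1) - 2^(t-β) ≤ m' i := by
    intro i d hzd
    have h1 : y i < ((m' i : ℝ) + 1) * E := (hy1 i).2
    have h2 : -r < y i - z i := (abs_lt.1 (hdi i)).1
    have hzd' : (d:ℝ) * ((2:ℝ)^(t-1) * E) ≤ z i := by rw [hPE]; exact hzd
    have hlt : ((d:ℝ) * 2^(t-1) - 2^(t-β)) * E < ((m' i : ℝ) + 1) * E := by nlinarith
    have h3 : (d:ℝ) * 2^(t-1) - 2^(t-β) < (m' i : ℝ) + 1 := lt_of_mul_lt_mul_right hlt hE.le
    have h4 : ((d * 2^(t-1) - 2^(t-β) : ℤ) : ℝ) < (m' i : ℝ) + 1 := by push_cast; linarith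
    have h5 : d * 2^(t-1) - 2^(t-β) < m' i + 1 := by exact_mod_cast h4
    omega
  have hmlo : ∀ i, (2*(m i : ℝ)) ≤ (m'' i : ℝ) ∧ (m'' i : ℝ) ≤ 2*(m i:ℝ) + 1 := by
    intro i
    rcases hm'' i with h | h <;> rw [h] <;> push_cast <;> constructor <;> linarith
  have hGmem : ∀ i, 2*m i*2^(t-1) - 2^(t-β) ≤ m' i ∧ m' i ≤ (2*m i+2)*2^(t-1) + 2^(t-β) := by
    intro i
    constructor
    · refine keyL i (2*m i) (le_trans ?_ (hzbox i).1)
      have h := (hmlo i).1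
      push_cast
      nlinarith
    · refine keyU i (2*m i+2) (le_trans (hzbox i).2 ?_)
      have h := (hmlo i).2
      push_cast
      nlinarith
  have hFj : ∃ d : ℤ, (d = 2*m j ∨ d = 2*m j + 1 ∨ d = 2*m j + 2) ∧
      d * 2^(t-1) - 2^(t-β) ≤ m' j ∧ m' j ≤ d * 2^(t-1) + 2^(t-β) := by
    have hz2 : ∃ d : ℤ, (d = 2*m j ∨ d = 2*m j + 1 ∨ d = 2*m j + 2) ∧ z j = (d:ℝ) * A := by
      rcases hzj with h | h <;> rcases hm'' j with h' | h'
      · exact ⟨2*m j, Or.inl rfl, by rw [h, h']; try push_cast; try ring⟩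
      · exact ⟨2*m j + 1, Or.inr (Or.inl rfl), by rw [h, h']; try push_cast; try ring⟩
      · exact ⟨2*m j + 1, Or.inr (Or.inl rfl), by rw [h, h']; try push_cast; try ring⟩
      · exact ⟨2*m j + 2, Or.inr (Or.inr rfl), by rw [h, h']; try push_cast; try ring⟩
    obtain ⟨d, hd, hzd⟩ := hz2
    exact ⟨d, hd, keyL j d hzd.ge, keyU j d hzd.le⟩
  obtain ⟨d, hd, hdlo, hdhi⟩ := hFj
  rw [Finset.mem_coe, Finset.mem_biUnion]
  refine ⟨j, Finset.mem_univ j, Fintype.mem_piFinset.2 fun i => ?_⟩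
  by_cases hij : i = j
  · subst hij
    rw [if_pos rfl]
    simp only [Finset.mem_union, Finset.mem_Icc]
    rcases hd with h | h | h
    · exact Or.inl (Or.inl ⟨by rw [← h]; exact hdlo, by rw [← h]; exact hdhi⟩)
    · exact Or.inl (Or.inr ⟨by rw [← h]; exact hdlo, by rw [← h]; exact hdhi⟩)
    · exact Or.inr ⟨by rw [← h]; exact hdlo, by rw [← h]; exact hdhi⟩
  · rw [if_neg hij, Finset.mem_Icc]
    exact hGmem i

lemma biUnion_card_le (n' : ℕ) (m : Fin (n'+1) → ℤ) (β t : ℕ) (hβ : 1 ≤ β) (hβt : β ≤ t) :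
    ((Finset.univ.biUnion fun j : Fin (n'+1) => Fintype.piFinset fun i =>
        if i = j then
          ((Finset.Icc ((2*m j)*2^(t-1) - 2^(t-β)) ((2*m j)*2^(t-1) + 2^(t-β)) ∪
            Finset.Icc ((2*m j+1)*2^(t-1) - 2^(t-β)) ((2*m j+1)*2^(t-1) + 2^(t-β))) ∪
            Finset.Icc ((2*m j+2)*2^(t-1) - 2^(t-β)) ((2*m j+2)*2^(t-1) + 2^(t-β)) : Finset ℤ)
        else Finset.Icc (2*m i*2^(t-1) - 2^(t-β)) ((2*m i+2)*2^(t-1) + 2^(t-β))).card)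
      ≤ (n'+1) * (9 * 2^(t-β) * (4 * 2^t)^n') := by
  have ht1 : 1 ≤ t := le_trans hβ hβt
  have hq1 : 1 ≤ 2^(t-β) := Nat.one_le_two_pow
  have hcard1 : ∀ a : ℤ, (Finset.Icc (a - 2^(t-β)) (a + 2^(t-β))).card = 2*2^(t-β)+1 := by
    intro a
    rw [Int.card_Icc]
    have : a + 2^(t-β) + 1 - (a - 2^(t-β)) = ((2*2^(t-β)+1 : ℕ) : ℤ) := by push_cast; ring
    rw [this, Int.toNat_natCast]
  have hFcard : ∀ j : Fin (n'+1),
      (((Finset.Icc ((2*m j)*2^(t-1) - 2^(t-β)) ((2*m j)*2^(t-1) + 2^(t-β)) ∪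
         Finset.Icc ((2*m j+1)*2^(t-1) - 2^(t-β)) ((2*m j+1)*2^(t-1) + 2^(t-β))) ∪
         Finset.Icc ((2*m j+2)*2^(t-1) - 2^(t-β)) ((2*m j+2)*2^(t-1) + 2^(t-β)) : Finset ℤ)).card
        ≤ 9 * 2^(t-β) := by
    intro j
    calc _ ≤ (Finset.Icc ((2*m j)*2^(t-1) - 2^(t-β)) ((2*m j)*2^(t-1) + 2^(t-β)) ∪
         Finset.Icc ((2*m j+1)*2^(t-1) - 2^(t-β)) ((2*m j+1)*2^(t-1) + 2^(t-β))).card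
          + (Finset.Icc ((2*m j+2)*2^(t-1) - 2^(t-β)) ((2*m j+2)*2^(t-1) + 2^(t-β))).card :=
        Finset.card_union_le _ _
      _ ≤ (Finset.Icc ((2*m j)*2^(t-1) - 2^(t-β)) ((2*m j)*2^(t-1) + 2^(t-β))).card
          + (Finset.Icc ((2*m j+1)*2^(t-1) - 2^(t-β)) ((2*m j+1)*2^(t-1) + 2^(t-β))).card
          + (Finset.Icc ((2*m j+2)*2^(t-1) - 2^(t-β)) ((2*m j+2)*2^(t-1) + 2^(t-β))).card := by
        exact Nat.add_le_add_right (Finset.card_union_le _ _) _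
      _ ≤ 9 * 2^(t-β) := by
        rw [hcard1, hcard1, hcard1]
        omega
  have hGcard : ∀ i : Fin (n'+1),
      (Finset.Icc (2*m i*2^(t-1) - 2^(t-β)) ((2*m i+2)*2^(t-1) + 2^(t-β))).card ≤ 4 * 2^t := by
    intro i
    rw [Int.card_Icc]
    have h1 : (2*m i+2)*2^(t-1) + 2^(t-β) + 1 - (2*m i*2^(t-1) - 2^(t-β))
        = ((2*2^(t-1) + 2*2^(t-β) + 1 : ℕ) : ℤ) := by push_cast; ring
    rw [h1, Int.toNat_natCast]
    have h2 : 2*2^(t-1) = 2^t := by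
      rw [← pow_succ']
      congr 1
      omega
    have h3 : (2:ℕ)^(t-β) ≤ 2^t := Nat.pow_le_pow_right (by norm_num) (by omega)
    have h4 : (1:ℕ) ≤ 2^t := Nat.one_le_two_pow
    omega
  calc _ ≤ ∑ j : Fin (n'+1), (Fintype.piFinset fun i =>
        if i = j then
          ((Finset.Icc ((2*m j)*2^(t-1) - 2^(t-β)) ((2*m j)*2^(t-1) + 2^(t-β)) ∪
            Finset.Icc ((2*m j+1)*2^(t-1) - 2^(t-β)) ((2*m j+1)*2^(t-1) + 2^(t-β))) ∪
            Finset.Icc ((2*m j+2)*2^(t-1) - 2^(t-β)) ((2*m j+2)*2^(t-1) + 2^(t-β)) : Finset ℤ)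
        else Finset.Icc (2*m i*2^(t-1) - 2^(t-β)) ((2*m i+2)*2^(t-1) + 2^(t-β))).card :=
      Finset.card_biUnion_le
    _ ≤ ∑ _j : Fin (n'+1), 9 * 2^(t-β) * (4 * 2^t)^n' := by
      refine Finset.sum_le_sum fun j _ => ?_
      rw [Fintype.card_piFinset]
      rw [← Finset.mul_prod_erase Finset.univ _ (Finset.mem_univ j)]
      rw [if_pos rfl]
      refine Nat.mul_le_mul (hFcard j) ?_
      calc (∏ i ∈ Finset.univ.erase j, (if i = j then _ else
              Finset.Icc (2*m i*2^(t-1) - 2^(t-β)) ((2*m i+2)*2^(t-1) + 2^(t-β))).card)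
          ≤ ∏ _i ∈ Finset.univ.erase j, 4 * 2^t := by
            refine Finset.prod_le_prod' fun i hi => ?_
            rw [if_neg (Finset.ne_of_mem_erase hi)]
            exact hGcard i
        _ = (4 * 2^t)^n' := by
            rw [Finset.prod_const, Finset.card_erase_of_mem (Finset.mem_univ j),
              Finset.card_univ, Fintype.card_fin]
            rfl
    _ = (n'+1) * (9 * 2^(t-β) * (4 * 2^t)^n') := by
      rw [Finset.sum_const, Finset.card_univ, Fintype.card_fin, smul_eq_mul]

lemma final_real_bound (n' β t : ℕ) (hβt : β ≤ t) :
    (((n'+1) * (9 * 2^(t-β) * (4 * 2^t)^n') : ℕ) : ℝ)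
      ≤ (9 * ((n'+1 : ℕ) : ℝ) * 4 ^ (n'+1) + 1) * (2 : ℝ) ^ (-(β : ℤ)) * 2 ^ (t * (n'+1)) := by
  have key : (2:ℝ)^(t-β) = 2^t * (2:ℝ)^(-(β:ℤ)) := by
    rw [zpow_neg, zpow_natCast]
    field_simp
    rw [← pow_add]
    congr 1
    omega
  have r3 : (2:ℝ)^(t*(n'+1)) = ((2:ℝ)^t)^(n'+1) := by rw [pow_mul]
  push_cast
  rw [key, r3, mul_pow]
  have h4 : (9 * ((n':ℝ)+1) * 4^n' : ℝ) ≤ 9 * ((n':ℝ)+1) * 4^(n'+1) + 1 := by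
    have h5 : (4:ℝ)^n' ≤ 4^(n'+1) := by
      apply pow_le_pow_right₀ (by norm_num) (Nat.le_succ n')
    nlinarith [h5, (Nat.cast_nonneg n' : (0:ℝ) ≤ n')]
  calc ((n':ℝ)+1) * (9 * (2^t * (2:ℝ)^(-(β:ℤ))) * (4^n' * ((2:ℝ)^t)^n'))
      = (9 * ((n':ℝ)+1) * 4^n') * ((2:ℝ)^(-(β:ℤ)) * ((2:ℝ)^t)^(n'+1)) := by ring
    _ ≤ (9 * ((n':ℝ)+1) * 4^(n'+1) + 1) * ((2:ℝ)^(-(β:ℤ)) * ((2:ℝ)^t)^(n'+1)) := by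
        exact mul_le_mul_of_nonneg_right h4 (by positivity)
    _ = (9 * ((n':ℝ)+1) * 4^(n'+1) + 1) * (2:ℝ)^(-(β:ℤ)) * ((2:ℝ)^t)^(n'+1) := by ring

/-- For `η = 2^{-β}` and `t ≥ β`, the number of dyadic cubes of side `2^{-t} ℓ(I)`
meeting the `η/2`-halo of the skeleton of `I` is at most `C_n η 2^{tn}`. -/
theorem card_small_cubes_meeting_halo (n : ℕ) :
    ∃ C : ℝ, 0 < C ∧
      ∀ (k : ℤ) (m : Fin n → ℤ) (β t : ℕ), 1 ≤ β → β ≤ t →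
        ((({m' : Fin n → ℤ |
            (dyadicCube n (k + t) m' ∩
              dyadicHalo n ((2 : ℝ) ^ (-(β : ℤ)) / 2) k m).Nonempty}).ncard : ℝ)
          ≤ C * (2 : ℝ) ^ (-(β : ℤ)) * 2 ^ (t * n)) := by
  refine ⟨9 * n * 4 ^ n + 1, by positivity, ?_⟩
  intro k m β t hβ hβt
  rcases Nat.eq_zero_or_pos n with hn | hn
  · subst hn
    have hsk : dyadicSkeleton 0 k m = ∅ := by
      refine Set.eq_empty_iff_forall_notMem.2 fun x hx => ?_
      simp only [dyadicSkeleton, Set.mem_iUnion] at hx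
      obtain ⟨m'', -, hx⟩ := hx
      have huniv : dyadicCube 0 (k+1) m'' = Set.univ := by
        ext y; simp [dyadicCube]
      rw [huniv, frontier_univ] at hx
      exact hx
    have hempty : {m' : Fin 0 → ℤ |
        (dyadicCube 0 (k + t) m' ∩ dyadicHalo 0 ((2:ℝ)^(-(β:ℤ))/2) k m).Nonempty} = ∅ := by
      refine Set.eq_empty_iff_forall_notMem.2 fun m' hm' => ?_
      obtain ⟨y, -, hy⟩ := hm'
      have hy' : y ∈ Metric.thickening ((2:ℝ) ^ (-(β : ℤ)) / 2 * 2 ^ (-k))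
          (dyadicSkeleton 0 k m) := hy
      rw [hsk, Metric.thickening_empty] at hy'
      exact hy'
    rw [hempty]
    simp only [Set.ncard_empty, Nat.cast_zero]
    positivity
  · obtain ⟨n', rfl⟩ : ∃ n', n = n' + 1 := ⟨n - 1, by omega⟩
    have hsub := halo_subset_biUnion n' k m β t hβ hβt
    have h0 : {m' : Fin (n'+1) → ℤ |
        (dyadicCube (n'+1) (k + t) m' ∩
          dyadicHalo (n'+1) ((2:ℝ)^(-(β:ℤ))/2) k m).Nonempty}.ncard
        ≤ (Finset.univ.biUnion fun j : Fin (n'+1) => Fintype.piFinset fun i =>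
        if i = j then
          ((Finset.Icc ((2*m j)*2^(t-1) - 2^(t-β)) ((2*m j)*2^(t-1) + 2^(t-β)) ∪
            Finset.Icc ((2*m j+1)*2^(t-1) - 2^(t-β)) ((2*m j+1)*2^(t-1) + 2^(t-β))) ∪
            Finset.Icc ((2*m j+2)*2^(t-1) - 2^(t-β)) ((2*m j+2)*2^(t-1) + 2^(t-β)) : Finset ℤ)
        else Finset.Icc (2*m i*2^(t-1) - 2^(t-β)) ((2*m i+2)*2^(t-1) + 2^(t-β))).card := by
      rw [← Set.ncard_coe_finset]
      exact Set.ncard_le_ncard hsub (Finset.finite_toSet _)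
    have h1 := biUnion_card_le n' m β t hβ hβt
    have h2 := final_real_bound n' β t hβt
    calc (({m' : Fin (n'+1) → ℤ |
        (dyadicCube (n'+1) (k + t) m' ∩
          dyadicHalo (n'+1) ((2:ℝ)^(-(β:ℤ))/2) k m).Nonempty}.ncard : ℕ) : ℝ)
        ≤ (((n'+1) * (9 * 2^(t-β) * (4 * 2^t)^n') : ℕ) : ℝ) := by
          exact_mod_cast le_trans h0 h1
      _ ≤ (9 * ((n'+1 : ℕ) : ℝ) * 4 ^ (n'+1) + 1) * (2:ℝ) ^ (-(β:ℤ)) * 2 ^ (t * (n'+1)) := h2
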